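/- For every m ∈ [0,1] and κ ∈ (e^{−2}, 1), the function s_{m,κ} has a unique maximizer on [0,1]: there exists exactly one h* ∈ [0,1] such that s_{m,κ}(h*) ≥ s_{m,κ}(h) for all h ∈ [0,1] (the function has a single mode for κ > e^{−2}). -/

import Mathlib

noncomputable def s (m κ h : ℝ) : ℝ := m * κ ^ ((1 - h) ^ 2) + (1 - m) * κ ^ (h ^ 2)

/-!
With `c = log κ`, the derivative of `s m κ` is
`2c ((1 - m) h e^{c h²} - m (1 - h) e^{c (1 - h)²})`, which for `h ∈ (0, 1)` has the sign of
`m ρ(h) - (1 - m)`, where `ρ(h) = (h⁻¹ - 1) e^{c (1 - 2h)}` is the ratio of its two terms.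
Because `c > -2`, `ρ` is strictly decreasing on `(0, 1)`, so once the derivative is `≤ 0` it
stays negative. A continuous function whose derivative changes sign at most once, from `+` to `-`,
cannot attain its maximum on an interval at two points: between them it would either increase
strictly or drop strictly below the value at the right one.
-/

open Real Set

theorem lt_or_exists_lt_of_deriv_single_crossing {f f' : ℝ → ℝ} {x y : ℝ} (hxy : x < y)
    (hf : ContinuousOn f (Icc x y)) (hf' : ∀ t ∈ Ioo x y, HasDerivAt f (f' t) t)
    (hcross : ∀ t u, x < t → t < u → u < y → f' t ≤ 0 → f' u < 0) :
    f x < f y ∨ ∃ t ∈ Ioo x y, f y < f t := by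
  by_cases hpos : ∀ t ∈ Ioo x y, 0 < f' t
  · left
    refine strictMonoOn_of_hasDerivWithinAt_pos (f' := f') (convex_Icc x y) hf (fun t ht => ?_) ?_
      (left_mem_Icc.2 hxy.le) (right_mem_Icc.2 hxy.le) hxy
    · rw [interior_Icc] at ht ⊢
      exact (hf' t ht).hasDerivWithinAt
    · simpa only [interior_Icc] using hpos
  · push Not at hpos
    obtain ⟨t, ht, hft⟩ := hpos
    right
    refine ⟨t, ht, strictAntiOn_of_hasDerivWithinAt_neg (f' := f') (convex_Icc t y)
      (hf.mono (Icc_subset_Icc_left ht.1.le)) (fun u hu => ?_) (fun u hu => ?_)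
      (left_mem_Icc.2 ht.2.le) (right_mem_Icc.2 ht.2.le) ht.2⟩
    · rw [interior_Icc] at hu ⊢
      exact (hf' u ⟨ht.1.trans hu.1, hu.2⟩).hasDerivWithinAt
    · rw [interior_Icc] at hu
      exact hcross t u ht.1 hu.1 hu.2 hft

theorem existsUnique_isMaxOn_of_deriv_single_crossing {f f' : ℝ → ℝ} {a b : ℝ}
    (hab : a ≤ b) (hf : ContinuousOn f (Icc a b)) (hf' : ∀ x ∈ Ioo a b, HasDerivAt f (f' x) x)
    (hcross : ∀ x y, a < x → x < y → y < b → f' x ≤ 0 → f' y < 0) :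
    ∃! x, x ∈ Icc a b ∧ ∀ y ∈ Icc a b, f y ≤ f x := by
  have not_both_max : ∀ x ∈ Icc a b, ∀ y ∈ Icc a b, x < y →
      (∀ z ∈ Icc a b, f z ≤ f x) → (∀ z ∈ Icc a b, f z ≤ f y) → False := by
    intro x hx y hy hxy hxmax hymax
    have hsub : Icc x y ⊆ Icc a b := Icc_subset_Icc hx.1 hy.2
    rcases lt_or_exists_lt_of_deriv_single_crossing hxy (hf.mono hsub)
      (fun t ht => hf' t ⟨hx.1.trans_lt ht.1, ht.2.trans_le hy.2⟩)
      (fun t u ht htu hu => hcross t u (hx.1.trans_lt ht) htu (hu.trans_le hy.2)) with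
      hlt | ⟨t, ht, hlt⟩
    · exact (hxmax y hy).not_gt hlt
    · exact (hymax t (hsub (Ioo_subset_Icc_self ht))).not_gt hlt
  obtain ⟨x, hx, hxmax⟩ := isCompact_Icc.exists_isMaxOn (nonempty_Icc.2 hab) hf
  refine ⟨x, ⟨hx, fun y hy => hxmax hy⟩, fun y ⟨hy, hymax⟩ => ?_⟩
  rcases lt_trichotomy y x with h | h | h
  · exact (not_both_max y hy x hx h hymax fun z hz => hxmax hz).elim
  · exact h
  · exact (not_both_max x hx y hy h (fun z hz => hxmax hz) hymax).elim

noncomputable def sDeriv (m c x : ℝ) : ℝ :=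
  2 * c * ((1 - m) * x * exp (c * x ^ 2) - m * (1 - x) * exp (c * (1 - x) ^ 2))

theorem hasDerivAt_s {m κ : ℝ} (hκ : 0 < κ) (x : ℝ) :
    HasDerivAt (s m κ) (sDeriv m (log κ) x) x := by
  have hs : s m κ = fun h => m * exp (log κ * (1 - h) ^ 2) + (1 - m) * exp (log κ * h ^ 2) := by
    funext h
    simp only [s, rpow_def_of_pos hκ]
  rw [hs]
  refine ((((((hasDerivAt_id' x).const_sub 1).fun_pow 2).const_mul (log κ)).exp.const_mul m
    ).fun_add ((((hasDerivAt_id' x).fun_pow 2).const_mul (log κ)).exp.const_mul (1 - m))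
    ).congr_deriv ?_
  rw [sDeriv]
  ring

theorem strictAntiOn_inv_sub_one_mul_exp {c : ℝ} (hc : -2 < c) :
    StrictAntiOn (fun t => (t⁻¹ - 1) * exp (c * (1 - 2 * t))) (Ioo 0 1) := by
  set f' : ℝ → ℝ := fun t => -(exp (c * (1 - 2 * t)) * (t⁻¹ ^ 2 + 2 * c * (t⁻¹ - 1)))
  have hderiv : ∀ t ∈ Ioo (0 : ℝ) 1,
      HasDerivAt (fun t => (t⁻¹ - 1) * exp (c * (1 - 2 * t))) (f' t) t := by
    intro t ht
    refine (((hasDerivAt_inv ht.1.ne').sub_const 1).fun_mul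
      ((((hasDerivAt_id' t).const_mul 2).const_sub 1).const_mul c).exp).congr_deriv ?_
    simp only [f', inv_pow]
    ring
  refine strictAntiOn_of_hasDerivWithinAt_neg (f' := f') (convex_Ioo 0 1)
    (fun t ht => (hderiv t ht).continuousAt.continuousWithinAt) (fun t ht => ?_) (fun t ht => ?_)
  · rw [interior_Ioo] at ht ⊢
    exact (hderiv t ht).hasDerivWithinAt
  · rw [interior_Ioo] at ht
    have hu : 1 < t⁻¹ := one_lt_inv_iff₀.2 ht
    have hquad : 0 < t⁻¹ ^ 2 + 2 * c * (t⁻¹ - 1) := by nlinarith [sq_nonneg (t⁻¹ - 2)]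
    exact neg_neg_of_pos (mul_pos (exp_pos _) hquad)

theorem sDeriv_eq_mul {m c x : ℝ} (hx : x ≠ 0) :
    sDeriv m c x =
      2 * c * x * exp (c * x ^ 2) * ((1 - m) - m * ((x⁻¹ - 1) * exp (c * (1 - 2 * x)))) := by
  have hsplit : exp (c * (1 - x) ^ 2) = exp (c * x ^ 2) * exp (c * (1 - 2 * x)) := by
    rw [← exp_add]; ring_nf
  rw [sDeriv, hsplit]
  field_simp

theorem sDeriv_neg_of_nonpos {m c x y : ℝ} (hm : 0 ≤ m) (hc : c ∈ Ioo (-2) 0) (hx : 0 < x)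
    (hxy : x < y) (hy : y < 1) (hfx : sDeriv m c x ≤ 0) : sDeriv m c y < 0 := by
  set ρ : ℝ → ℝ := fun t => (t⁻¹ - 1) * exp (c * (1 - 2 * t))
  have hρ : ρ y < ρ x := strictAntiOn_inv_sub_one_mul_exp hc.1 ⟨hx, hxy.trans hy⟩
    ⟨hx.trans hxy, hy⟩ hxy
  have hscale : ∀ t, 0 < t → 2 * c * t * exp (c * t ^ 2) < 0 := fun t ht =>
    mul_neg_of_neg_of_pos (mul_neg_of_neg_of_pos (by linarith [hc.2]) ht) (exp_pos _)
  have hx' : 0 ≤ (1 - m) - m * ρ x := by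
    rw [sDeriv_eq_mul hx.ne'] at hfx
    exact nonneg_of_mul_nonpos_right hfx (hscale x hx)
  have hy' : 0 < (1 - m) - m * ρ y := by
    rcases hm.eq_or_lt with rfl | hm
    · norm_num
    · nlinarith [mul_lt_mul_of_pos_left hρ hm]
  rw [sDeriv_eq_mul (hx.trans hxy).ne']
  exact mul_neg_of_neg_of_pos (hscale y (hx.trans hxy)) hy'

theorem unique_maximizer (m κ : ℝ)
    (hm : m ∈ Set.Icc (0 : ℝ) 1) (hκ : κ ∈ Set.Ioo (Real.exp (-2)) 1) :
    ∃! h : ℝ, h ∈ Set.Icc (0 : ℝ) 1 ∧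
      ∀ h' ∈ Set.Icc (0 : ℝ) 1, s m κ h' ≤ s m κ h := by
  have hκ0 : 0 < κ := (exp_pos _).trans hκ.1
  have hc : log κ ∈ Ioo (-2) 0 :=
    ⟨by simpa using log_lt_log (exp_pos _) hκ.1, log_neg hκ0 hκ.2⟩
  exact existsUnique_isMaxOn_of_deriv_single_crossing zero_le_one
    (fun x _ => (hasDerivAt_s hκ0 x).continuousAt.continuousWithinAt)
    (fun x _ => hasDerivAt_s hκ0 x)
    (fun x y hx hxy hy => sDeriv_neg_of_nonpos hm.1 hc hx hxy hy)
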